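/- Let s ≥ 2 and suppose H is a K_{s+1}-free simple graph on n vertices with H → (s, s)^v and χ(H) = 2s−1. Then the lexicographic product C_{4s−1}[H] is a K_{2s+1}-free graph on (4s−1)·n vertices with C_{4s−1}[H] → (2s, 2s)^v and χ(C_{4s−1}[H]) = 4s−1. (Hence F_v^χ(2s, 2s; 2s+1) ≤ (4s−1)·F_v^χ(s, s; s+1).) -/

import Mathlib

/-- `G → (a₁,…,a_r)ᵛ`: for every coloring of the vertices of `G` with `r` colors,
there is a color `i` and a clique of `G` on `a i` vertices all of whose vertices
receive color `i`. -/
def VArrows {V : Type*} {r : ℕ} (G : SimpleGraph V) (a : Fin r → ℕ) : Prop :=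
  ∀ c : V → Fin r, ∃ i : Fin r, ∃ t : Finset V,
    G.IsNClique (a i) t ∧ ∀ v ∈ t, c v = i

/-- The lexicographic product `G[H]` of two simple graphs: `(u, v)` is adjacent to
`(u', v')` iff `u` is adjacent to `u'` in `G`, or `u = u'` and `v` is adjacent to
`v'` in `H`. -/
def SimpleGraph.lexProd {V W : Type*} (G : SimpleGraph V) (H : SimpleGraph W) :
    SimpleGraph (V × W) where
  Adj p q := G.Adj p.1 q.1 ∨ (p.1 = q.1 ∧ H.Adj p.2 q.2)
  symm := by
    constructor
    rintro p q (h | ⟨h1, h2⟩)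
    · exact Or.inl h.symm
    · exact Or.inr ⟨h1.symm, h2.symm⟩
  loopless := by
    constructor
    rintro p (h | ⟨-, h⟩)
    · exact G.loopless.irrefl _ h
    · exact H.loopless.irrefl _ h

/-!
A clique of `C_{4s-1}[H]` meets at most two copies of `H`, since the cycle is triangle-free,
and each of them in at most `s` vertices. Given a 2-colouring, every copy contains a
monochromatic `K_s`; labelling each cycle vertex by the colour of that clique, the odd cycle has
two adjacent vertices with the same label, and their two cliques form a monochromatic `K_{2s}`.

For the chromatic number write `k = 2s - 1`. A `k`-colouring of `H` extends to `C_{2k+1}[H]` by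
giving copy `x` the colours `x k, …, x k + k - 1` modulo `2k + 1`; consecutive blocks are
disjoint. In a `2k`-colouring every copy sees at least `k` colours, so adjacent copies see
complementary colour sets, and "copy `x` sees colour `0`" would properly 2-colour the odd cycle.
-/

open Finset

namespace SimpleGraph

variable {V W : Type*} {G : SimpleGraph V} {H : SimpleGraph W}

variable (G H) in
def lexProdRight (x : V) : H →g G.lexProd H where
  toFun := Prod.mk x
  map_rel' h := Or.inr ⟨rfl, h⟩

theorem IsClique.card_le_of_cliqueFree {r : ℕ} (hG : G.CliqueFree (r + 1)) {t : Finset V}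
    (ht : G.IsClique t) : #t ≤ r := by
  by_contra! h
  obtain ⟨u, hut, hu⟩ := exists_subset_card_eq h
  exact hG u ⟨ht.subset hut, hu⟩

theorem IsClique.image_fst_of_lexProd [DecidableEq V] {t : Finset (V × W)}
    (ht : (G.lexProd H).IsClique (t : Set (V × W))) :
    G.IsClique (t.image Prod.fst : Set V) := by
  rw [coe_image]
  rintro _ ⟨p, hp, rfl⟩ _ ⟨q, hq, rfl⟩ hne
  exact (ht hp hq fun h => hne (h ▸ rfl)).resolve_right fun h => hne h.1

theorem IsClique.image_snd_fiber_of_lexProd [DecidableEq V] [DecidableEq W]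
    {t : Finset (V × W)} (ht : (G.lexProd H).IsClique (t : Set (V × W))) (x : V) :
    H.IsClique ({p ∈ t | p.1 = x}.image Prod.snd : Set W) := by
  rw [coe_image]
  rintro _ ⟨p, hp, rfl⟩ _ ⟨q, hq, rfl⟩ hne
  rw [mem_coe, mem_filter] at hp hq
  have hpq : p.1 = q.1 := hp.2.trans hq.2.symm
  exact ((ht hp.1 hq.1 fun h => hne (h ▸ rfl)).resolve_left (hpq ▸ G.loopless.irrefl _)).2

theorem CliqueFree.lexProd {a b : ℕ} (hG : G.CliqueFree (a + 1)) (hH : H.CliqueFree (b + 1)) :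
    (G.lexProd H).CliqueFree (a * b + 1) := by
  classical
  intro t ht
  have hfiber (x : V) : #{p ∈ t | p.1 = x} ≤ b := by
    rw [← card_image_of_injOn (f := Prod.snd) fun p hp q hq h =>
      Prod.ext ((mem_filter.1 hp).2.trans (mem_filter.1 hq).2.symm) h]
    exact (ht.isClique.image_snd_fiber_of_lexProd x).card_le_of_cliqueFree hH
  refine absurd ht.card_eq (ne_of_lt ?_)
  calc #t ≤ b * #(t.image Prod.fst) := card_le_mul_card_image t b fun x _ => hfiber x
    _ ≤ b * a := Nat.mul_le_mul_left b
        (ht.isClique.image_fst_of_lexProd.card_le_of_cliqueFree hG)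
    _ < a * b + 1 := by lia

theorem _root_.VArrows.lexProd {r : ℕ} {a b : Fin r → ℕ} (hG : VArrows G a)
    (hH : VArrows H b) : VArrows (G.lexProd H) (fun i => a i * b i) := by
  classical
  intro c
  choose i t ht hc using fun x => hH fun w => c (x, w)
  obtain ⟨j, T, hT, hTj⟩ := hG i
  set S := (T.sigma t).map (Equiv.sigmaEquivProd V W).toEmbedding
  have hS (p : V × W) : p ∈ S ↔ p.1 ∈ T ∧ p.2 ∈ t p.1 := by simp [S, mem_map_equiv]
  refine ⟨j, S, ⟨fun p hp q hq hne => ?_, ?_⟩, fun p hp => ?_⟩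
  · rw [mem_coe, hS] at hp hq
    by_cases hpq : p.1 = q.1
    · exact Or.inr ⟨hpq, (ht p.1).isClique hp.2 (hpq ▸ hq.2) fun h => hne (Prod.ext hpq h)⟩
    · exact Or.inl (hT.isClique hp.1 hq.1 hpq)
  · rw [card_map, card_sigma, sum_congr rfl fun x _ => (ht x).card_eq,
      sum_congr rfl fun x hx => congrArg b (hTj x hx), sum_const, hT.card_eq, smul_eq_mul]
  · rw [hS] at hp
    rw [hc p.1 p.2 hp.2, hTj p.1 hp.1]

theorem vArrows_two_of_not_colorable {r : ℕ} (hG : ¬G.Colorable r) :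
    VArrows G fun _ : Fin r => 2 := by
  classical
  intro c
  by_contra! h
  refine hG ⟨Coloring.mk c fun {u v} huv hc => ?_⟩
  obtain ⟨w, hw, hcw⟩ := h (c u) {u, v}
    ((isNClique_singleton.2 rfl).insert fun _ hw => mem_singleton.1 hw ▸ huv)
  rcases mem_insert.1 hw with rfl | hw
  · exact hcw rfl
  · exact hcw (mem_singleton.1 hw ▸ hc.symm)

theorem Coloring.lt_card_range_of_not_colorable {α : Type*} [Fintype α] [DecidableEq α]
    {k : ℕ} (C : H.Coloring α) [DecidablePred (· ∈ Set.range C)] (hH : ¬H.Colorable k) :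
    k < #{c | c ∈ Set.range C} := by
  by_contra! h
  let C' : H.Coloring {c // c ∈ ({c | c ∈ Set.range C} : Finset α)} :=
    Coloring.mk (fun w => ⟨C w, by simp⟩) fun hvw he => C.valid hvw (congrArg Subtype.val he)
  exact hH (C'.colorable.mono (by simpa using h))

theorem not_colorable_lexProd {k : ℕ} (hG : ¬G.Colorable 2) (hH : ¬H.Colorable k) :
    ¬(G.lexProd H).Colorable (2 * (k + 1)) := by
  classical
  rintro ⟨g⟩
  let S (x : V) : Finset (Fin (2 * (k + 1))) := {c | c ∈ Set.range (g.comp (G.lexProdRight H x))}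
  have hdisj {x y : V} (hxy : G.Adj x y) : Disjoint (S x) (S y) := by
    simp only [S, disjoint_filter]
    rintro _ - ⟨v, rfl⟩ ⟨w, hw⟩
    exact g.valid (Or.inl hxy) hw.symm
  have hcover {x y : V} (hxy : G.Adj x y) : S x ∪ S y = univ := by
    refine eq_univ_of_card _ ?_
    have hx : k < #(S x) := Coloring.lt_card_range_of_not_colorable _ hH
    have hy : k < #(S y) := Coloring.lt_card_range_of_not_colorable _ hH
    have hle := card_le_univ (S x ∪ S y)
    rw [card_union_of_disjoint (hdisj hxy), Fintype.card_fin] at hle ⊢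
    omega
  let c₀ : Fin (2 * (k + 1)) := ⟨0, by omega⟩
  have hvalid {x y : V} (hxy : G.Adj x y) : decide (c₀ ∈ S x) ≠ decide (c₀ ∈ S y) := by
    intro he
    have hiff : c₀ ∈ S x ↔ c₀ ∈ S y := by simpa using he
    rcases mem_union.1 (hcover hxy ▸ mem_univ c₀) with h | h
    · exact Finset.disjoint_left.1 (hdisj hxy) h (hiff.1 h)
    · exact Finset.disjoint_left.1 (hdisj hxy) (hiff.2 h) h
  exact hG (by simpa using (Coloring.mk _ hvalid).colorable)

open Fin.CommRing in
theorem cycleGraph_cliqueFree_three {n : ℕ} (hn : 4 ≤ n) : (cycleGraph n).CliqueFree 3 := by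
  obtain ⟨m, rfl⟩ : ∃ m, n = m + 4 := ⟨n - 4, by omega⟩
  intro t ht
  obtain ⟨a, b, c, hab, hac, hbc, -⟩ := is3Clique_iff.1 ht
  have h1 : (1 : Fin (m + 4)) ≠ 0 := by simp
  have h3 : (3 : Fin (m + 4)) ≠ 0 := by
    simp [Fin.ext_iff, Nat.mod_eq_of_lt (by omega : 3 < m + 4)]
  rw [cycleGraph_adj] at hab hac hbc
  grind

theorem not_colorable_two_cycleGraph_of_odd {n : ℕ} (hn : 2 ≤ n) (hodd : Odd n) :
    ¬(cycleGraph n).Colorable 2 :=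
  ((chromaticNumber_eq_iff_colorable_not_colorable (n := 2)).1
    (chromaticNumber_cycleGraph_of_odd n hn hodd)).2

open Fin.CommRing in
theorem Colorable.cycleGraph_lexProd {k : ℕ} (hH : H.Colorable k) :
    ((cycleGraph (2 * k + 1)).lexProd H).Colorable (2 * k + 1) := by
  obtain ⟨f⟩ := hH
  obtain _ | k := k
  · exact ⟨Coloring.mk (fun p => (f p.2).elim0) fun {p} => (f p.2).elim0⟩
  have hcast {a b : ℕ} (ha : a < 2 * (k + 1) + 1) (hb : b < 2 * (k + 1) + 1)
      (h : (a : Fin (2 * (k + 1) + 1)) = b) : a = b := by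
    simpa [Fin.ext_iff, Nat.mod_eq_of_lt ha, Nat.mod_eq_of_lt hb] using h
  have hshift (v w : W) : ((k + 1 + f v : ℕ) : Fin (2 * (k + 1) + 1)) ≠ (f w : ℕ) := by
    intro h
    have := hcast (by omega) (by omega) h
    omega
  refine ⟨Coloring.mk (fun p => p.1 * (k + 1 : ℕ) + (f p.2 : ℕ)) ?_⟩
  rintro ⟨x, v⟩ ⟨y, w⟩ (hxy | ⟨rfl, hvw⟩) he
  · have hxy : x - y = 1 ∨ y - x = 1 := hxy
    dsimp only at he
    push_cast at he
    rcases hxy with h | h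
    · refine hshift v w ?_
      push_cast
      linear_combination he - ((k : Fin (2 * (k + 1) + 1)) + 1) * h
    · refine hshift w v ?_
      push_cast
      linear_combination -he - ((k : Fin (2 * (k + 1) + 1)) + 1) * h
  · exact f.valid hvw (Fin.ext (hcast (by omega) (by omega) (add_left_cancel he)))

end SimpleGraph

/-- If `H` is a `K_{s+1}`-free graph on `n` vertices with `H → (s,s)ᵛ` and
`χ(H) = 2s-1`, then `C_{4s-1}[H]` is a `K_{2s+1}`-free graph on `(4s-1)·n` vertices
with `C_{4s-1}[H] → (2s, 2s)ᵛ` and `χ(C_{4s-1}[H]) = 4s-1`.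
(Hence `F_v^χ(2s,2s;2s+1) ≤ (4s-1)·F_v^χ(s,s;s+1)`.) -/
theorem stmt_10 (s n : ℕ) (hs : 2 ≤ s) (H : SimpleGraph (Fin n))
    (hHfree : H.CliqueFree (s + 1)) (hHarr : VArrows H ![s, s])
    (hHchi : H.chromaticNumber = ((2 * s - 1 : ℕ) : ℕ∞)) :
    Fintype.card (Fin (4 * s - 1) × Fin n) = (4 * s - 1) * n ∧
    ((SimpleGraph.cycleGraph (4 * s - 1)).lexProd H).CliqueFree (2 * s + 1) ∧
    VArrows ((SimpleGraph.cycleGraph (4 * s - 1)).lexProd H) ![2 * s, 2 * s] ∧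
    ((SimpleGraph.cycleGraph (4 * s - 1)).lexProd H).chromaticNumber =
      ((4 * s - 1 : ℕ) : ℕ∞) := by
  obtain ⟨k, rfl⟩ : ∃ k, s = k + 1 := ⟨s - 1, by omega⟩
  rw [show 4 * (k + 1) - 1 = 2 * (2 * k + 1) + 1 by omega]
  rw [show 2 * (k + 1) - 1 = 2 * k + 1 by omega, Nat.cast_succ,
    SimpleGraph.chromaticNumber_eq_iff_colorable_not_colorable] at hHchi
  have hodd : ¬(SimpleGraph.cycleGraph (2 * (2 * k + 1) + 1)).Colorable 2 :=
    SimpleGraph.not_colorable_two_cycleGraph_of_odd (by omega) (odd_two_mul_add_one _)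
  refine ⟨by simp, (SimpleGraph.cycleGraph_cliqueFree_three (by omega)).lexProd hHfree, ?_, ?_⟩
  · convert VArrows.lexProd (SimpleGraph.vArrows_two_of_not_colorable hodd) hHarr using 1
    funext i
    fin_cases i <;> rfl
  · rw [Nat.cast_succ, SimpleGraph.chromaticNumber_eq_iff_colorable_not_colorable]
    exact ⟨hHchi.1.cycleGraph_lexProd, SimpleGraph.not_colorable_lexProd hodd hHchi.2⟩
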